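/- Suppose G is a graph such that for every set S of vertices with |S| ≤ ε₀ n we have |N_G(S)| ≥ 2|S|, where ε₀ > 0. Let End(v_0) be the Pósa end-set of a longest path starting at v_0. Then |End(v_0)| > ε₀ n. -/

import Mathlib

/-- `q` is obtained from the path `p` (from `v₀` to `w`) by a single Pósa rotation. -/
def IsPosaRotation {V : Type*} (G : SimpleGraph V) {v0 w y : V}
    (p : G.Walk v0 w) (q : G.Walk v0 y) : Prop :=
  ∃ i : ℕ, i + 1 < p.length ∧ G.Adj (p.getVert i) w ∧ y = p.getVert (i + 1) ∧
    q.support = p.support.take (i + 1) ++ (p.support.drop (i + 1)).reverse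

/-- The paths obtainable from `p0` by a sequence of Pósa rotations fixing `v₀`. -/
inductive PosaReachable {V : Type*} (G : SimpleGraph V) {v0 w0 : V} (p0 : G.Walk v0 w0) :
    ∀ {w : V}, G.Walk v0 w → Prop
  | base : PosaReachable G p0 p0
  | rot {w y : V} (p : G.Walk v0 w) (q : G.Walk v0 y) :
      PosaReachable G p0 p → IsPosaRotation G p q → PosaReachable G p0 q

/-- `End(v₀)`: the set of endpoints other than `v₀` of paths obtainable from `p0` by
sequences of Pósa rotations with fixed endpoint `v₀`. -/
def posaEnd {V : Type*} (G : SimpleGraph V) {v0 w0 : V} (p0 : G.Walk v0 w0) : Set V :=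
  {y | y ≠ v0 ∧ ∃ q : G.Walk v0 y, PosaReachable G p0 q}

/-- The external neighbourhood `N_G(S) = {u ∉ S : u has a neighbour in S}`. -/
def extNbhd {V : Type*} (G : SimpleGraph V) (S : Set V) : Set V :=
  {u | u ∉ S ∧ ∃ s ∈ S, G.Adj s u}

/-!
Pósa's argument. Let `S = End(v₀)` and let `u ∉ S` be adjacent to `y ∈ S`, the end of a rotated
path `Q`. By maximality `u` lies on `Q`, and the successor of `u` on `Q` is again in `S` (it is
the new end of the rotation along the edge `u y`). If neither neighbour of `u` on `p0` were in
`S`, both `p0`-edges at `u` would survive all rotations and hence be the two `Q`-edges at `u`,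
one of which leads into `S`. So `N_G(S)` consists of `p0`-predecessors and `p0`-successors of
vertices of `S`; as `w0 ∈ S` has no successor, `|N_G(S)| < 2|S|`, which the expansion hypothesis
rules out when `|S| ≤ ε₀ n`.
-/

open SimpleGraph

namespace SimpleGraph.Walk

variable {V : Type*} {G : SimpleGraph V}

lemma IsPath.eq_getVert_succ_or_pred {u v x : V} {p : G.Walk u v} (hp : p.IsPath) {i : ℕ}
    (hi : i ≤ p.length) (h : s(p.getVert i, x) ∈ p.edges) :
    x = p.getVert (i + 1) ∨ 0 < i ∧ x = p.getVert (i - 1) := by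
  obtain ⟨k, hk, hke⟩ := p.mk_mem_edges_iff_exists.mp h
  rcases Sym2.eq_iff.mp hke with ⟨hki, rfl⟩ | ⟨rfl, hki⟩
  · obtain rfl : k = i := hp.getVert_injOn (show k ≤ p.length by omega) hi hki
    exact .inl rfl
  · have : k + 1 = i := hp.getVert_injOn (show k + 1 ≤ p.length from hk) hi hki
    exact .inr ⟨by omega, by rw [show i - 1 = k by omega]⟩

lemma IsPath.mem_support_of_adj_of_forall_length_le {u v x : V} {p : G.Walk u v}
    (hp : p.IsPath) (hmax : ∀ (a b : V) (q : G.Walk a b), q.IsPath → q.length ≤ p.length)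
    (hadj : G.Adj v x) : x ∈ p.support := by
  by_contra hx
  simpa using hmax _ _ _ (hp.concat hx hadj)

lemma IsPath.ncard_setOf_mk_mem_edges_lt {u v : V} {p : G.Walk u v} (hp : p.IsPath)
    {S : Set V} (hS : S.Finite) (hv : v ∈ S) :
    {x | ∃ s ∈ S, s(x, s) ∈ p.edges}.ncard < 2 * S.ncard := by
  set predIdx := {j | j < p.length ∧ p.getVert (j + 1) ∈ S}
  set succIdx := {j | j < p.length ∧ p.getVert j ∈ S}
  have hfin : ∀ T ⊆ {j | j < p.length}, T.Finite := fun T hT => (Set.finite_Iio _).subset hT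
  have hsub : {x | ∃ s ∈ S, s(x, s) ∈ p.edges} ⊆
      p.getVert '' predIdx ∪ (fun j => p.getVert (j + 1)) '' succIdx := by
    rintro x ⟨s, hs, hxs⟩
    obtain ⟨j, hj, hje⟩ := p.mk_mem_edges_iff_exists.mp hxs
    rcases Sym2.eq_iff.mp hje with ⟨rfl, rfl⟩ | ⟨rfl, rfl⟩
    exacts [.inl ⟨j, ⟨hj, hs⟩, rfl⟩, .inr ⟨j, ⟨hj, hs⟩, rfl⟩]
  have hpred_le : predIdx.ncard ≤ S.ncard :=
    Set.ncard_le_ncard_of_injOn (fun j => p.getVert (j + 1)) (fun j hj => hj.2)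
      (fun j hj k hk h => by
        have := hp.getVert_injOn (show j + 1 ≤ p.length from hj.1)
          (show k + 1 ≤ p.length from hk.1) h
        omega) hS
  have hsucc_le : succIdx.ncard ≤ (S \ {v}).ncard :=
    Set.ncard_le_ncard_of_injOn p.getVert
      (fun j hj => ⟨hj.2, fun hjv => hj.1.ne <| hp.getVert_injOn (show j ≤ p.length from hj.1.le)
        (show p.length ≤ p.length from le_rfl) (by rw [getVert_length]; exact hjv)⟩)
      (fun j hj k hk h => hp.getVert_injOn (show j ≤ p.length from hj.1.le)
        (show k ≤ p.length from hk.1.le) h) hS.sdiff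
  have hS1 : 0 < S.ncard := (Set.ncard_pos hS).mpr ⟨v, hv⟩
  calc {x | ∃ s ∈ S, s(x, s) ∈ p.edges}.ncard
      ≤ (p.getVert '' predIdx ∪ (fun j => p.getVert (j + 1)) '' succIdx).ncard :=
        Set.ncard_le_ncard hsub (((hfin predIdx fun j hj => hj.1).image _).union
          ((hfin succIdx fun j hj => hj.1).image _))
    _ ≤ predIdx.ncard + succIdx.ncard :=
        (Set.ncard_union_le _ _).trans (add_le_add
          (Set.ncard_image_le (hfin predIdx fun j hj => hj.1))
          (Set.ncard_image_le (hfin succIdx fun j hj => hj.1)))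
    _ < 2 * S.ncard := by
        rw [Set.ncard_sdiff_singleton_of_mem hv] at hsucc_le
        omega

def posaRotate {u w : V} (p : G.Walk u w) (i : ℕ) (h : G.Adj (p.getVert i) w) :
    G.Walk u (p.getVert (i + 1)) :=
  (p.take i).append (cons h (p.drop (i + 1)).reverse)

lemma support_posaRotate {u w : V} (p : G.Walk u w) {i : ℕ} (h : G.Adj (p.getVert i) w)
    (hi : i + 1 ≤ p.length) :
    (p.posaRotate i h).support = p.support.take (i + 1) ++ (p.support.drop (i + 1)).reverse := by
  simp [posaRotate, support_append, support_take, Nat.min_eq_left hi]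

lemma edges_posaRotate {u w : V} (p : G.Walk u w) {i : ℕ} (h : G.Adj (p.getVert i) w) :
    (p.posaRotate i h).edges =
      p.edges.take i ++ s(p.getVert i, w) :: (p.edges.drop (i + 1)).reverse := by
  simp [posaRotate, edges_append, edges_take, edges_drop]

end SimpleGraph.Walk

section Posa

variable {V : Type*} {G : SimpleGraph V}

lemma isPosaRotation_posaRotate {v0 w : V} (p : G.Walk v0 w) {i : ℕ}
    (h : G.Adj (p.getVert i) w) (hi : i + 1 < p.length) :
    IsPosaRotation G p (p.posaRotate i h) :=
  ⟨i, hi, h, rfl, p.support_posaRotate h hi.le⟩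

namespace IsPosaRotation

variable {v0 w y : V} {p : G.Walk v0 w} {q : G.Walk v0 y}

lemma support_perm (h : IsPosaRotation G p q) : q.support.Perm p.support := by
  obtain ⟨i, -, -, -, hsup⟩ := h
  rw [hsup]
  exact ((List.reverse_perm _).append_left _).trans (by rw [List.take_append_drop])

lemma mem_edges {e : Sym2 V} (h : IsPosaRotation G p q) (he : e ∈ p.edges) (hy : y ∉ e) :
    e ∈ q.edges := by
  obtain ⟨i, hi, hadj, rfl, hsup⟩ := h
  obtain rfl : q = p.posaRotate i hadj :=
    Walk.ext_support (hsup.trans (p.support_posaRotate hadj hi.le).symm)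
  have hi' : i < p.edges.length := by rw [Walk.length_edges]; omega
  rw [← List.take_append_drop i p.edges, List.drop_eq_getElem_cons hi', Walk.getElem_edges]
    at he
  rw [Walk.edges_posaRotate]
  grind [Sym2.mem_mk_right]

end IsPosaRotation

namespace PosaReachable

variable {v0 w0 y : V} {p0 : G.Walk v0 w0} {q : G.Walk v0 y}

lemma support_perm (h : PosaReachable G p0 q) : q.support.Perm p0.support := by
  induction h with
  | base => rfl
  | rot p q _ hrot ih => exact hrot.support_perm.trans ih

lemma isPath (hp0 : p0.IsPath) (h : PosaReachable G p0 q) : q.IsPath :=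
  .mk' (h.support_perm.nodup_iff.mpr hp0.support_nodup)

lemma length_eq (h : PosaReachable G p0 q) : q.length = p0.length := by
  simpa using h.support_perm.length_eq

lemma mem_posaEnd (hp0 : p0.IsPath) (hlen : 0 < p0.length) (h : PosaReachable G p0 q) :
    y ∈ posaEnd G p0 := by
  refine ⟨?_, q, h⟩
  rintro rfl
  exact hlen.ne' (h.length_eq.symm.trans (Walk.isPath_iff_nil.mp (h.isPath hp0)).length_eq_zero)

-- A rotation deletes only the edge entering the new endpoint.
lemma mem_edges (hp0 : p0.IsPath) (hlen : 0 < p0.length) (h : PosaReachable G p0 q)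
    {e : Sym2 V} (he : e ∈ p0.edges) (hS : ∀ z ∈ e, z ∉ posaEnd G p0) : e ∈ q.edges := by
  induction h with
  | base => exact he
  | rot p q hp hrot ih =>
    exact hrot.mem_edges ih fun hy => hS _ hy ((hp.rot p q hrot).mem_posaEnd hp0 hlen)

lemma getVert_succ_mem_posaEnd (hp0 : p0.IsPath) (hlen : 0 < p0.length)
    (h : PosaReachable G p0 q) {i : ℕ} (hi : i < q.length) (hadj : G.Adj (q.getVert i) y) :
    q.getVert (i + 1) ∈ posaEnd G p0 := by
  rcases (show i + 1 ≤ q.length from hi).eq_or_lt with hi | hi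
  · rw [hi, Walk.getVert_length]
    exact h.mem_posaEnd hp0 hlen
  · exact (h.rot q _ (isPosaRotation_posaRotate q hadj hi)).mem_posaEnd hp0 hlen

end PosaReachable

theorem exists_mem_posaEnd_mk_mem_edges {v0 w0 u : V} {p0 : G.Walk v0 w0} (hp0 : p0.IsPath)
    (hlen : 0 < p0.length)
    (hmax : ∀ (x y : V) (q : G.Walk x y), q.IsPath → q.length ≤ p0.length)
    (hu : u ∈ extNbhd G (posaEnd G p0)) : ∃ x ∈ posaEnd G p0, s(u, x) ∈ p0.edges := by
  obtain ⟨huS, y, ⟨-, Q, hQ⟩, hyu⟩ := hu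
  have hQpath := hQ.isPath hp0
  obtain ⟨i, rfl, hi⟩ := Walk.mem_support_iff_exists_getVert.mp
    (hQpath.mem_support_of_adj_of_forall_length_le (hQ.length_eq ▸ hmax) hyu)
  have hi : i < Q.length := by
    refine hi.lt_of_ne fun hiQ => huS ?_
    rw [hiQ, Walk.getVert_length]
    exact hQ.mem_posaEnd hp0 hlen
  have hsucc := hQ.getVert_succ_mem_posaEnd hp0 hlen hi hyu.symm
  by_contra! hno
  -- the `p0`-edges at `u` avoid `End(v₀)`, so they are `Q`-edges at `u` other than the one
  -- to `Q.getVert (i + 1) ∈ End(v₀)`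
  have hpred : ∀ x, s(Q.getVert i, x) ∈ p0.edges → 0 < i ∧ x = Q.getVert (i - 1) := by
    intro x hx
    have hxS : x ∉ posaEnd G p0 := fun hxS => hno x hxS hx
    have hxQ : s(Q.getVert i, x) ∈ Q.edges := by
      refine hQ.mem_edges hp0 hlen hx fun z hz => ?_
      rcases Sym2.mem_iff.mp hz with rfl | rfl
      exacts [huS, hxS]
    rcases hQpath.eq_getVert_succ_or_pred hi.le hxQ with rfl | h
    exacts [absurd hsucc hxS, h]
  obtain ⟨j, hju, hjle⟩ :=
    Walk.mem_support_iff_exists_getVert.mp (hQ.support_perm.subset (Q.getVert_mem_support i))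
  have hj : j < p0.length := by
    refine hjle.lt_of_ne fun hjp => huS ?_
    rw [← hju, hjp, Walk.getVert_length]
    exact PosaReachable.base.mem_posaEnd hp0 hlen
  obtain ⟨hipos, hnext⟩ := hpred (p0.getVert (j + 1))
    (p0.mk_mem_edges_iff_exists.mpr ⟨j, hj, by rw [hju]⟩)
  rcases Nat.eq_zero_or_pos j with rfl | hjpos
  · have : i = 0 := hQpath.getVert_injOn hi.le (Nat.zero_le _)
      (by rw [← hju, Walk.getVert_zero, Walk.getVert_zero])
    omega
  · obtain ⟨-, hprev⟩ := hpred (p0.getVert (j - 1))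
      (p0.mk_mem_edges_iff_exists.mpr
        ⟨j - 1, by omega, by rw [Nat.sub_add_cancel hjpos, hju, Sym2.eq_swap]⟩)
    have := hp0.getVert_injOn (show j + 1 ≤ p0.length from hj) (show j - 1 ≤ p0.length by omega)
      (hnext.trans hprev.symm)
    omega

theorem ncard_extNbhd_posaEnd_lt [Finite V] {v0 w0 : V} {p0 : G.Walk v0 w0} (hp0 : p0.IsPath)
    (hlen : 0 < p0.length)
    (hmax : ∀ (x y : V) (q : G.Walk x y), q.IsPath → q.length ≤ p0.length) :
    (extNbhd G (posaEnd G p0)).ncard < 2 * (posaEnd G p0).ncard :=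
  (Set.ncard_le_ncard (fun _ hu => exists_mem_posaEnd_mk_mem_edges hp0 hlen hmax hu)).trans_lt
    (hp0.ncard_setOf_mk_mem_edges_lt (Set.toFinite _) (PosaReachable.base.mem_posaEnd hp0 hlen))

end Posa

theorem stmt_4_general {V : Type*} [Fintype V] (G : SimpleGraph V)
    (ε₀ : ℝ)
    (hexp : ∀ S : Set V, (S.ncard : ℝ) ≤ ε₀ * Fintype.card V →
      2 * S.ncard ≤ (extNbhd G S).ncard)
    (v0 w0 : V) (p0 : G.Walk v0 w0) (hp0 : p0.IsPath) (hlen : 0 < p0.length)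
    (hmax : ∀ (x y : V) (q : G.Walk x y), q.IsPath → q.length ≤ p0.length) :
    ε₀ * Fintype.card V < ((posaEnd G p0).ncard : ℝ) := by
  by_contra! h
  exact (ncard_extNbhd_posaEnd_lt hp0 hlen hmax).not_ge (hexp _ h)

/-- If `G` has minimum degree at least 2 and satisfies the expansion property
`|S| ≤ ε₀ n → |N_G(S)| ≥ 2|S|`, then the Pósa end-set of a longest path satisfies
`|End(v₀)| > ε₀ n`. -/
theorem stmt_4 {V : Type*} [Fintype V] [DecidableEq V] (G : SimpleGraph V) [DecidableRel G.Adj]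
    (ε₀ : ℝ) (hε₀ : 0 < ε₀)
    (hdeg : ∀ v : V, 2 ≤ G.degree v)
    (hexp : ∀ S : Set V, (S.ncard : ℝ) ≤ ε₀ * Fintype.card V →
      2 * S.ncard ≤ (extNbhd G S).ncard)
    (v0 w0 : V) (p0 : G.Walk v0 w0) (hp0 : p0.IsPath) (hlen : 0 < p0.length)
    (hmax : ∀ (x y : V) (q : G.Walk x y), q.IsPath → q.length ≤ p0.length) :
    ε₀ * Fintype.card V < ((posaEnd G p0).ncard : ℝ) :=
  stmt_4_general G ε₀ hexp v0 w0 p0 hp0 hlen hmax
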